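/- arXiv:2509.03731 — 7 statements merged into one kernel-verified Lean document; each statement's English description precedes it below -/
import Mathlib

section
/- Under uniform punishment, if d > t, b > (1-v)·s, and d > (b·t + v·s)/(b - (1-v)·s), then the expected utility U(a) = b·(1 - d + a) - (if a ≤ t then 0 else s·(v + (1-v)·a)) over a ∈ [0,d] is maximized at a = d (defiance). -/
/-- Uniform punishment, defiance case: if d > t, b > (1-v)·s and
d > (b·t + v·s)/(b - (1-v)·s), expected utility is maximized at a = d. -/
theorem stmt_1 (d b t s v : ℝ)
    (hd0 : 0 ≤ d) (hd1 : d ≤ 1) (hb : 0 < b)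
    (ht0 : 0 ≤ t) (ht1 : t ≤ 1) (hs : 0 < s)
    (hv0 : 0 ≤ v) (hv1 : v ≤ 1)
    (hdt : t < d)
    (hbold : (1 - v) * s < b)
    (hdef : (b * t + v * s) / (b - (1 - v) * s) < d)
    (U : ℝ → ℝ)
    (hU : ∀ a, U a = b * (1 - d + a) - (if a ≤ t then 0 else s * (v + (1 - v) * a))) :
    ∀ a, 0 ≤ a → a ≤ d → U a ≤ U d := by
  have hpos : 0 < b - (1 - v) * s := by linarith
  have hdef' : b * t + v * s < d * (b - (1 - v) * s) := by
    have := (div_lt_iff₀ hpos).mp hdef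
    linarith
  intro a ha0 had
  rw [hU a, hU d]
  have hdnt : ¬ d ≤ t := not_le.mpr hdt
  rw [if_neg hdnt]
  by_cases h : a ≤ t
  · rw [if_pos h]
    nlinarith
  · rw [if_neg h]
    nlinarith
end

section
/- Under uniform punishment, if d > t and either b ≤ (1-v)·s or d ≤ (b·t + v·s)/(b - (1-v)·s), then the expected utility U(a) = b·(1 - d + a) - (if a ≤ t then 0 else s·(v + (1-v)·a)) over a ∈ [0,d] is maximized at a = t (self-censorship). -/
/-- Uniform punishment, self-censorship case: if d > t and either b ≤ (1-v)·s or
d ≤ (b·t + v·s)/(b - (1-v)·s), expected utility is maximized at a = t. -/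
theorem stmt_2 (d b t s v : ℝ)
    (hd0 : 0 ≤ d) (hd1 : d ≤ 1) (hb : 0 < b)
    (ht0 : 0 ≤ t) (ht1 : t ≤ 1) (hs : 0 < s)
    (hv0 : 0 ≤ v) (hv1 : v ≤ 1)
    (hdt : t < d)
    (hsc : b ≤ (1 - v) * s ∨ d ≤ (b * t + v * s) / (b - (1 - v) * s))
    (U : ℝ → ℝ)
    (hU : ∀ a, U a = b * (1 - d + a) - (if a ≤ t then 0 else s * (v + (1 - v) * a))) :
    ∀ a, 0 ≤ a → a ≤ d → U a ≤ U t := by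
  intro a ha0 had
  rw [hU a, hU t, if_pos le_rfl]
  by_cases hat : a ≤ t
  · simp only [if_pos hat]; nlinarith
  · simp only [if_neg hat]
    -- need: b*(1-d+a) - s*(v+(1-v)*a) ≤ b*(1-d+t)
    -- i.e. (b-(1-v)*s)*a ≤ b*t + s*v
    have key : (b - (1 - v) * s) * a ≤ b * t + s * v := by
      by_cases hbs : b ≤ (1 - v) * s
      · nlinarith
      · push_neg at hbs
        rcases hsc with h | h
        · linarith
        · have hpos : 0 < b - (1 - v) * s := by linarith
          rw [le_div_iff₀ hpos] at h
          nlinarith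
    nlinarith
end

section
/- Under uniform punishment with t < 1, any defiant individual must have boldness exceeding s/(1-t): that is, if d > t, b > (1-v)·s, and d > (b·t + v·s)/(b - (1-v)·s) with d ≤ 1, then b > s/(1-t). -/
/-- Under uniform punishment with t < 1, any defiant individual has boldness
exceeding s/(1-t). -/
theorem stmt_3 (d b t s v : ℝ)
    (hd0 : 0 ≤ d) (hd1 : d ≤ 1) (hb : 0 < b)
    (ht0 : 0 ≤ t) (ht1 : t < 1) (hs : 0 < s)
    (hv0 : 0 ≤ v) (hv1 : v ≤ 1)
    (hdt : t < d)
    (hbold : (1 - v) * s < b)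
    (hdef : (b * t + v * s) / (b - (1 - v) * s) < d) :
    s / (1 - t) < b := by
  have hden : 0 < b - (1 - v) * s := by linarith
  rw [div_lt_iff₀ hden] at hdef
  rw [div_lt_iff₀ (by linarith : (0:ℝ) < 1 - t)]
  nlinarith [mul_le_mul_of_nonneg_right hd1 hden.le]
end

section
/- Under proportional punishment with perfect surveillance (v = 1), if d > t and b ≥ s, then the expected utility U(a) = b·(1 - d + a) - (if a ≤ t then 0 else s·(a - t)) over a ∈ [0,d] is maximized at a = d; if instead b < s, it is uniquely maximized at a = t. -/
/-- Proportional punishment with perfect surveillance: if d > t and b ≥ s, utility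
is maximized at a = d; if b < s, it is uniquely maximized at a = t. -/
theorem stmt_5 (d b t s : ℝ)
    (hd0 : 0 ≤ d) (hd1 : d ≤ 1) (hb : 0 < b)
    (ht0 : 0 ≤ t) (ht1 : t ≤ 1) (hs : 0 < s)
    (hdt : t < d)
    (U : ℝ → ℝ)
    (hU : ∀ a, U a = b * (1 - d + a) - (if a ≤ t then 0 else s * (a - t))) :
    (s ≤ b → ∀ a, 0 ≤ a → a ≤ d → U a ≤ U d) ∧
    (b < s → ∀ a, 0 ≤ a → a ≤ d → a ≠ t → U a < U t) := by
  constructor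
  · intro hsb a ha0 had
    rw [hU a, hU d]
    by_cases h : a ≤ t
    · rw [if_pos h, if_neg (show ¬ d ≤ t by linarith)]; nlinarith
    · rw [if_neg h, if_neg (show ¬ d ≤ t by linarith)]; push_neg at h; nlinarith
  · intro hbs a ha0 had hat
    rw [hU a, hU t]
    rw [if_pos le_rfl]
    by_cases h : a ≤ t
    · rw [if_pos h]
      have : a < t := lt_of_le_of_ne h hat
      nlinarith
    · rw [if_neg h]; push_neg at h; nlinarith
end

section
/- Under proportional punishment with v < 1, if d > t and the critical value d* = (1/2)·(t + (b - v·s)/((1-v)·s)) satisfies t < d* < d, then the expected utility U(a) = b·(1 - d + a) - (if a ≤ t then 0 else s·(a - t)·(v + (1-v)·a)) over a ∈ [0,d] is uniquely maximized at a = d*, which lies strictly between t and d (partial self-censorship). -/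
/-- Proportional punishment, partial self-censorship: if d > t and
t < d* < d for d* = (1/2)·(t + (b - v·s)/((1-v)·s)), the expected utility on
[0,d] is uniquely maximized at a = d*, which lies strictly between t and d. -/
theorem stmt_7 (d b t s v : ℝ)
    (hd0 : 0 ≤ d) (hd1 : d ≤ 1) (hb : 0 < b)
    (ht0 : 0 ≤ t) (ht1 : t ≤ 1) (hs : 0 < s)
    (hv0 : 0 ≤ v) (hv1 : v < 1)
    (hdt : t < d)
    (dstar : ℝ)
    (hdstar : dstar = (1 / 2) * (t + (b - v * s) / ((1 - v) * s)))
    (h1 : t < dstar) (h2 : dstar < d)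
    (U : ℝ → ℝ)
    (hU : ∀ a, U a = b * (1 - d + a) -
      (if a ≤ t then 0 else s * (a - t) * (v + (1 - v) * a))) :
    (∀ a, 0 ≤ a → a ≤ d → a ≠ dstar → U a < U dstar) ∧ t < dstar ∧ dstar < d := by
  have hv' : (1 - v) ≠ 0 := by linarith
  have hs' : s ≠ 0 := ne_of_gt hs
  have key : ∀ a : ℝ, b * (1 - d + a) - s * (a - t) * (v + (1 - v) * a)
      = b * (1 - d + dstar) - s * (dstar - t) * (v + (1 - v) * dstar)
        - s * (1 - v) * (a - dstar) ^ 2 := by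
    intro a
    subst hdstar
    field_simp
    ring
  have hUd : U dstar = b * (1 - d + dstar) - s * (dstar - t) * (v + (1 - v) * dstar) := by
    rw [hU, if_neg (by linarith)]
  refine ⟨?_, h1, h2⟩
  intro a ha0 had hne
  rw [hU, hUd]
  have hsv : 0 < s * (1 - v) := mul_pos hs (by linarith)
  by_cases h : a ≤ t
  · rw [if_pos h]
    have hk := key t
    nlinarith [mul_pos (sub_pos.2 h1) (sub_pos.2 h1)]
  · rw [if_neg h]
    have hk := key a
    have hne' : a - dstar ≠ 0 := sub_ne_zero.2 hne
    have : 0 < (a - dstar) ^ 2 := by positivity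
    nlinarith
end

section
/- Under proportional punishment with v < 1, if d > t and d ≤ (1/2)·(t + (b - v·s)/((1-v)·s)), then the expected utility U(a) = b·(1 - d + a) - (if a ≤ t then 0 else s·(a - t)·(v + (1-v)·a)) over a ∈ [0,d] is maximized at a = d (defiance of individuals with intermediate desire). -/
/-- Proportional punishment, defiance of individuals with intermediate desire:
if d > t and d ≤ d*, utility is maximized at a = d. -/
theorem stmt_8 (d b t s v : ℝ)
    (hd0 : 0 ≤ d) (hd1 : d ≤ 1) (hb : 0 < b)
    (ht0 : 0 ≤ t) (ht1 : t ≤ 1) (hs : 0 < s)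
    (hv0 : 0 ≤ v) (hv1 : v < 1)
    (hdt : t < d)
    (hdef : d ≤ (1 / 2) * (t + (b - v * s) / ((1 - v) * s)))
    (U : ℝ → ℝ)
    (hU : ∀ a, U a = b * (1 - d + a) -
      (if a ≤ t then 0 else s * (a - t) * (v + (1 - v) * a))) :
    ∀ a, 0 ≤ a → a ≤ d → U a ≤ U d := by
  intro a ha had
  have hvs : (0:ℝ) < (1 - v) * s := mul_pos (by linarith) hs
  have hc : (1 - v) * s * ((b - v * s) / ((1 - v) * s)) = b - v * s :=
    mul_div_cancel₀ _ (ne_of_gt hvs)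
  have hkey : v * s + (1 - v) * s * (2 * d - t) ≤ b := by nlinarith [hdef]
  rw [hU a, hU d, if_neg (not_le.mpr hdt)]
  by_cases hat : a ≤ t
  · rw [if_pos hat]
    have h1 : s * (v + (1 - v) * d) ≤ b := by
      nlinarith [mul_nonneg hvs.le (sub_nonneg.mpr hdt.le)]
    nlinarith [mul_le_mul_of_nonneg_left h1 (sub_nonneg.mpr hdt.le),
      mul_nonneg hb.le (sub_nonneg.mpr hat)]
  · rw [if_neg hat]
    nlinarith [mul_le_mul_of_nonneg_left hkey (sub_nonneg.mpr had),
      mul_nonneg (mul_nonneg (by linarith : (0:ℝ) ≤ 1 - v) hs.le)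
        (mul_nonneg (sub_nonneg.mpr had) (sub_nonneg.mpr had))]
end

section
/- Under proportional punishment with v < 1, if d > t and t ≥ (1/2)·(t + (b - v·s)/((1-v)·s)), then the expected utility U(a) = b·(1 - d + a) - (if a ≤ t then 0 else s·(a - t)·(v + (1-v)·a)) over a ∈ [0,d] is maximized at a = t (full self-censorship). -/
/-- Proportional punishment, full self-censorship: if d > t and t ≥ d*, utility
is maximized at a = t. -/
theorem stmt_9 (d b t s v : ℝ)
    (hd0 : 0 ≤ d) (hd1 : d ≤ 1) (hb : 0 < b)
    (ht0 : 0 ≤ t) (ht1 : t ≤ 1) (hs : 0 < s)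
    (hv0 : 0 ≤ v) (hv1 : v < 1)
    (hdt : t < d)
    (hsc : (1 / 2) * (t + (b - v * s) / ((1 - v) * s)) ≤ t)
    (U : ℝ → ℝ)
    (hU : ∀ a, U a = b * (1 - d + a) -
      (if a ≤ t then 0 else s * (a - t) * (v + (1 - v) * a))) :
    ∀ a, 0 ≤ a → a ≤ d → U a ≤ U t := by
  have hpos : 0 < (1 - v) * s := mul_pos (by linarith) hs
  have hX : (b - v * s) / ((1 - v) * s) ≤ t := by linarith
  have hkey : b ≤ s * (v + (1 - v) * t) := by
    rw [div_le_iff₀ hpos] at hX; nlinarith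
  intro a ha had
  rw [hU a, hU t, if_pos le_rfl]
  by_cases h : a ≤ t
  · rw [if_pos h]; nlinarith
  · rw [if_neg h]
    push_neg at h
    nlinarith [mul_nonneg (sub_nonneg.mpr h.le) (sub_nonneg.mpr hkey),
      mul_nonneg (mul_nonneg hs.le (by linarith : (0:ℝ) ≤ 1 - v)) (sq_nonneg (a - t))]
end
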